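/- Under the stated setup, let 𝔲' ⊆ 𝔲 be a subspace with quotient map q : 𝔲 → 𝔰 := 𝔲/𝔲'. Suppose that the composition of q* ⊗ id : 𝔰* ⊗_k A → 𝔲* ⊗_k A with the projection 𝔲* ⊗_k A → coker(φ) is an isomorphism of A-modules. Then {a ∈ A : ρ(ξ)(a) = 0 for all ξ ∈ 𝔲'} = {a ∈ A : ρ(ξ)(a) = 0 for all ξ ∈ 𝔲}. -/
import Mathlib


noncomputable section

variable {k A 𝔲 : Type*}
variable [Field k] [CommRing A] [Algebra k A]
variable [AddCommGroup 𝔲] [Module k 𝔲]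

/-- The derivation `A → 𝔲* ⊗ₖ A` (with `𝔲* ⊗ₖ A` represented by `𝔲 →ₗ[k] A`)
sending `b` to `ξ ↦ ρ(ξ)(b)`. -/
def coactDer (ρ : 𝔲 →ₗ[k] Derivation k A A) : Derivation k A (𝔲 →ₗ[k] A) where
  toLinearMap :=
    { toFun := fun b =>
        { toFun := fun ξ => ρ ξ b
          map_add' := fun ξ η => by simp
          map_smul' := fun c ξ => by simp }
      map_add' := fun b c => by ext ξ; simp
      map_smul' := fun c b => by ext ξ; simp }
  map_one_eq_zero' := by ext ξ; simp
  leibniz' := fun a b => by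
    ext ξ
    simp [Derivation.leibniz, smul_eq_mul, mul_comm]

/-- The infinitesimal action `φ : Ω_{A/k} → 𝔲* ⊗ₖ A`, determined by
`φ(a db) = (ξ ↦ a · ρ(ξ)(b))`. -/
def phiDer (ρ : 𝔲 →ₗ[k] Derivation k A A) :
    KaehlerDifferential k A →ₗ[A] (𝔲 →ₗ[k] A) :=
  (coactDer ρ).liftKaehlerDifferential

/-- Precomposition with the quotient map, `(𝔲/𝔲')* ⊗ₖ A → 𝔲* ⊗ₖ A`. -/
def precompQ (𝔲' : Submodule k 𝔲) : ((𝔲 ⧸ 𝔲') →ₗ[k] A) →ₗ[A] (𝔲 →ₗ[k] A) where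
  toFun f := f.comp 𝔲'.mkQ
  map_add' f g := by ext v; simp
  map_smul' a f := by ext v; simp

/-- The invariants `A^𝔲 = {a ∈ A : ρ(ξ)(a) = 0 for all ξ ∈ 𝔲}`, as a
`k`-subalgebra of `A`. -/
def invariants (ρ : 𝔲 →ₗ[k] Derivation k A A) : Subalgebra k A where
  carrier := {a | ∀ ξ : 𝔲, ρ ξ a = 0}
  mul_mem' := fun {a b} ha hb ξ => by
    rw [Derivation.leibniz]
    simp [ha ξ, hb ξ]
  one_mem' := fun ξ => by simp
  add_mem' := fun {a b} ha hb ξ => by simp [ha ξ, hb ξ]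
  zero_mem' := fun ξ => by simp
  algebraMap_mem' := fun c ξ => by simp

/-- Let `𝔲' ⊆ 𝔲` be a subspace with quotient `𝔰 = 𝔲/𝔲'`.
If the composition of `q* ⊗ id : 𝔰* ⊗ₖ A → 𝔲* ⊗ₖ A` with the projection
`𝔲* ⊗ₖ A → coker φ` is an isomorphism, then the `𝔲'`-invariants of `A` coincide
with the `𝔲`-invariants. -/
theorem statement7 [FiniteDimensional k 𝔲] (ρ : 𝔲 →ₗ[k] Derivation k A A)
    (𝔲' : Submodule k 𝔲)
    (hiso : Function.Bijective
      ⇑((LinearMap.range (phiDer ρ)).mkQ ∘ₗ precompQ (A := A) 𝔲')) :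
    {a : A | ∀ ξ ∈ 𝔲', ρ ξ a = 0} = {a : A | ∀ ξ : 𝔲, ρ ξ a = 0} := by
  ext a
  simp only [Set.mem_setOf_eq]
  refine ⟨fun ha ξ => ?_, fun ha ξ _ => ha ξ⟩
  -- coactDer ρ a vanishes on 𝔲', so it factors through the quotient
  have hker : 𝔲' ≤ LinearMap.ker ((coactDer ρ) a : 𝔲 →ₗ[k] A) := fun ξ' hξ' => ha ξ' hξ'
  set f : (𝔲 ⧸ 𝔲') →ₗ[k] A := 𝔲'.liftQ ((coactDer ρ) a) hker with hf
  have hcomp : precompQ (A := A) 𝔲' f = (coactDer ρ) a := by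
    ext v
    simp [precompQ, f, Submodule.liftQ_apply]
  have hrange : (coactDer ρ) a ∈ LinearMap.range (phiDer ρ) :=
    ⟨KaehlerDifferential.D k A a, Derivation.liftKaehlerDifferential_comp_D (coactDer ρ) a⟩
  have h0 : ((LinearMap.range (phiDer ρ)).mkQ ∘ₗ precompQ (A := A) 𝔲') f = 0 := by
    rw [LinearMap.comp_apply, hcomp, Submodule.mkQ_apply, Submodule.Quotient.mk_eq_zero]
    exact hrange
  have hf0 : f = 0 := hiso.injective (by rw [h0]; simp)
  have : (coactDer ρ) a = 0 := by rw [← hcomp, hf0, map_zero]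
  have := congrArg (fun g : 𝔲 →ₗ[k] A => g ξ) this
  simpa [coactDer] using this
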